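/- arXiv:1310.8398 — 2 statements merged into one kernel-verified Lean document; each statement's English description precedes it below -/
import Mathlib

section
/- Let F : ℝⁿ → ℝ be a norm (F(x+y) ≤ F(x) + F(y), F(λ•x) = |λ| F(x), and F(x) = 0 iff x = 0), and let d_F(x,y) = F(y − x) be the associated translation-invariant metric. Then there exists a linear equivalence A : ℝⁿ ≃ₗ[ℝ] ℝⁿ such that for every bijection g : ℝⁿ → ℝⁿ satisfying d_F(g x, g y) = d_F(x, y) for all x, y, the conjugated map A ∘ g ∘ A⁻¹ is a Euclidean isometry: ‖A(g(A⁻¹ y)) − A(g(A⁻¹ x))‖ = ‖y − x‖ for all x, y ∈ ℝⁿ, where ‖·‖ is the Euclidean norm. -/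
/-!
The linear isometries of a finite-dimensional normed space `V` form a closed and bounded, hence
compact, subgroup `K` of `GL(V)`. Averaging a Euclidean norm over the Haar measure of `K`, i.e.
pulling back the `L²(K)`-norm along `x ↦ (u ↦ u⁻¹ x)`, gives a Euclidean norm on `V` invariant
under `K`; an orthonormal basis for it provides `A`. By Mazur–Ulam every bijective isometry of
`V` is affine with linear part in `K`.
-/

open Module MeasureTheory
open scoped ENNReal

theorem ContinuousMap.norm_toLp_comp_of_measurePreserving {α E : Type*} [TopologicalSpace α]
    [CompactSpace α] [MeasurableSpace α] [BorelSpace α] {μ : Measure α} [IsFiniteMeasure μ]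
    [NormedAddCommGroup E] [SecondCountableTopologyEither α E] {𝕜 : Type*} [NormedRing 𝕜]
    [Module 𝕜 E] [IsBoundedSMul 𝕜 E] {p : ℝ≥0∞} [Fact (1 ≤ p)] (f : C(α, E)) {φ : C(α, α)}
    (hφ : MeasurePreserving φ μ μ) :
    ‖ContinuousMap.toLp p μ 𝕜 (f.comp φ)‖ = ‖ContinuousMap.toLp p μ 𝕜 f‖ := by
  simp only [Lp.norm_def, eLpNorm_congr_ae (ContinuousMap.coeFn_toLp μ _)]
  exact congrArg ENNReal.toReal
    (eLpNorm_comp_measurePreserving f.continuous.aestronglyMeasurable hφ)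

theorem exists_linearEquiv_euclideanSpace_norm_eq_of_injective {V W : Type*} [AddCommGroup V]
    [Module ℝ V] [FiniteDimensional ℝ V] [NormedAddCommGroup W] [InnerProductSpace ℝ W] {n : ℕ}
    (hn : finrank ℝ V = n) (Φ : V →ₗ[ℝ] W) (hΦ : Function.Injective Φ) :
    ∃ A : V ≃ₗ[ℝ] EuclideanSpace ℝ (Fin n), ∀ x, ‖A x‖ = ‖Φ x‖ := by
  have hR : finrank ℝ (LinearMap.range Φ) = n := (LinearMap.finrank_range_of_inj hΦ).trans hn
  let I := ((stdOrthonormalBasis ℝ (LinearMap.range Φ)).reindex (finCongr hR)).repr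
  exact ⟨(LinearEquiv.ofInjective Φ hΦ).trans I.toLinearEquiv, fun x => I.norm_map _⟩

section CompactSubgroup

variable {V : Type*} [NormedAddCommGroup V] [NormedSpace ℝ V] [FiniteDimensional ℝ V]
  (K : Subgroup (V →L[ℝ] V)ˣ)

noncomputable def inverseOrbitMap : V →ₗ[ℝ] C(K, EuclideanSpace ℝ (Fin (finrank ℝ V))) where
  toFun x := ⟨fun u => toEuclidean ((↑(u : (V →L[ℝ] V)ˣ)⁻¹ : V →L[ℝ] V) x), by fun_prop⟩
  map_add' x y := by ext; simp
  map_smul' c x := by ext; simp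

theorem inverseOrbitMap_injective : Function.Injective (inverseOrbitMap K) := fun x y h => by
  simpa [inverseOrbitMap] using DFunLike.congr_fun h 1

theorem inverseOrbitMap_apply_eq_comp_mulLeft (u : K) (x : V) :
    inverseOrbitMap K (((u : (V →L[ℝ] V)ˣ) : V →L[ℝ] V) x) =
      (inverseOrbitMap K x).comp (ContinuousMap.mulLeft u⁻¹) := by
  ext v : 1
  simp [inverseOrbitMap]

theorem exists_linearEquiv_euclideanSpace_norm_apply_eq_of_compactSpace [CompactSpace K]
    {n : ℕ} (hn : finrank ℝ V = n) :
    ∃ A : V ≃ₗ[ℝ] EuclideanSpace ℝ (Fin n),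
      ∀ u ∈ K, ∀ x, ‖A ((u : V →L[ℝ] V) x)‖ = ‖A x‖ := by
  borelize ↥K
  let μ : Measure K := Measure.haar
  obtain ⟨A, hA⟩ := exists_linearEquiv_euclideanSpace_norm_eq_of_injective hn
    ((ContinuousMap.toLp 2 μ ℝ).toLinearMap ∘ₗ inverseOrbitMap K)
    ((ContinuousMap.toLp_injective μ).comp (inverseOrbitMap_injective K))
  refine ⟨A, fun u hu x => ?_⟩
  simp only [hA, LinearMap.comp_apply, ContinuousLinearMap.coe_coe]
  rw [inverseOrbitMap_apply_eq_comp_mulLeft K ⟨u, hu⟩]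
  exact ContinuousMap.norm_toLp_comp_of_measurePreserving _ (measurePreserving_mul_left μ _)

end CompactSubgroup

section LinearIsometries

variable (V : Type*) [NormedAddCommGroup V] [NormedSpace ℝ V]

def linearIsometrySubgroup : Subgroup (V →L[ℝ] V)ˣ where
  carrier := {u | ∀ x, ‖(u : V →L[ℝ] V) x‖ = ‖x‖}
  mul_mem' hu hv x := (hu _).trans (hv x)
  one_mem' _ := rfl
  inv_mem' {u} hu x := by
    simpa [← mul_apply_eq_comp] using (hu ((↑u⁻¹ : V →L[ℝ] V) x)).symm

variable {V} [FiniteDimensional ℝ V]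

theorem isCompact_linearIsometrySubgroup :
    IsCompact (linearIsometrySubgroup V : Set (V →L[ℝ] V)ˣ) := by
  set S : Set (V →L[ℝ] V) := {f | ∀ x, ‖f x‖ = ‖x‖}
  have himage : Units.val '' (linearIsometrySubgroup V : Set (V →L[ℝ] V)ˣ) = S := by
    refine Set.Subset.antisymm (Set.image_subset_iff.2 fun u hu => hu) fun f hf => ?_
    have hinj : Function.Injective f := fun a b hab => by
      rw [← sub_eq_zero, ← norm_eq_zero, ← hf, map_sub, hab, sub_self, norm_zero]
    let e := (LinearEquiv.ofInjectiveEndo (f : V →ₗ[ℝ] V) hinj).toContinuousLinearEquiv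
    exact ⟨(ContinuousLinearEquiv.unitsEquiv ℝ V).symm e, hf, rfl⟩
  have hclosed : IsClosed S := by
    simp only [S, Set.ofPred_forall]
    exact isClosed_iInter fun x => isClosed_eq (by fun_prop) continuous_const
  have hbounded : S ⊆ Metric.closedBall 0 1 := fun f hf =>
    mem_closedBall_zero_iff.2 (ContinuousLinearMap.opNorm_le_bound f zero_le_one fun x => by
      simp [hf x])
  rw [Units.isOpenEmbedding_val.isEmbedding.isCompact_iff, himage]
  exact (isCompact_closedBall 0 1).of_isClosed_subset hclosed hbounded

variable {n : ℕ}

theorem exists_linearEquiv_euclideanSpace_norm_linearIsometryEquiv_apply_eq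
    (hn : finrank ℝ V = n) :
    ∃ A : V ≃ₗ[ℝ] EuclideanSpace ℝ (Fin n), ∀ (T : V ≃ₗᵢ[ℝ] V) x, ‖A (T x)‖ = ‖A x‖ := by
  have := isCompact_iff_compactSpace.1 (isCompact_linearIsometrySubgroup (V := V))
  obtain ⟨A, hA⟩ :=
    exists_linearEquiv_euclideanSpace_norm_apply_eq_of_compactSpace (linearIsometrySubgroup V) hn
  exact ⟨A, fun T => hA ((ContinuousLinearEquiv.unitsEquiv ℝ V).symm T.toContinuousLinearEquiv)
    T.norm_map⟩

theorem exists_linearEquiv_euclideanSpace_norm_sub_isometryEquiv_eq (hn : finrank ℝ V = n) :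
    ∃ A : V ≃ₗ[ℝ] EuclideanSpace ℝ (Fin n),
      ∀ (g : V ≃ᵢ V) x y, ‖A (g x) - A (g y)‖ = ‖A x - A y‖ := by
  obtain ⟨A, hA⟩ := exists_linearEquiv_euclideanSpace_norm_linearIsometryEquiv_apply_eq hn
  refine ⟨A, fun g x y => ?_⟩
  have hg : g x - g y = g.toRealLinearIsometryEquiv (x - y) := by
    rw [map_sub, g.toRealLinearIsometryEquiv_apply, g.toRealLinearIsometryEquiv_apply,
      sub_sub_sub_cancel_right]
  rw [← map_sub A, ← map_sub A, hg, hA]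

end LinearIsometries

theorem exists_linearEquiv_euclideanSpace_norm_sub_eq_of_map_sub_eq {E : Type*} [AddCommGroup E]
    [Module ℝ E] [FiniteDimensional ℝ E] {n : ℕ} (hn : finrank ℝ E = n) (F : E → ℝ)
    (h_subadd : ∀ x y, F (x + y) ≤ F x + F y)
    (h_homog : ∀ (x : E) (l : ℝ), F (l • x) = |l| * F x) (h_sep : ∀ x, F x = 0 ↔ x = 0) :
    ∃ A : E ≃ₗ[ℝ] EuclideanSpace ℝ (Fin n), ∀ g : E → E, Function.Bijective g →
      (∀ x y, F (g y - g x) = F (y - x)) → ∀ x y, ‖A (g x) - A (g y)‖ = ‖A x - A y‖ := by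
  let _ : Norm E := ⟨F⟩
  have core : NormedSpace.Core ℝ E :=
    { norm_nonneg x := by
        have h := h_subadd x ((-1 : ℝ) • x)
        rw [h_homog, neg_one_smul, add_neg_cancel, (h_sep 0).2 rfl] at h
        show 0 ≤ F x
        norm_num at h
        linarith
      norm_smul c x := h_homog x c
      norm_triangle := h_subadd
      norm_eq_zero_iff := h_sep }
  let _ := NormedAddCommGroup.ofCore core
  let _ := NormedSpace.ofCore core
  obtain ⟨A, hA⟩ := exists_linearEquiv_euclideanSpace_norm_sub_isometryEquiv_eq hn
  refine ⟨A, fun g hg hgF => hA ⟨Equiv.ofBijective g hg, Isometry.of_dist_eq fun x y => ?_⟩⟩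
  rw [dist_eq_norm, dist_eq_norm]
  exact hgF y x

/-- The isometry group of a norm on `ℝⁿ` is conjugate, by a linear equivalence, to a
subgroup of the Euclidean isometry group. -/
theorem norm_isometries_conjugate_to_euclidean_isometries
    {n : ℕ} (F : EuclideanSpace ℝ (Fin n) → ℝ)
    (h_subadd : ∀ x y, F (x + y) ≤ F x + F y)
    (h_homog : ∀ (x : EuclideanSpace ℝ (Fin n)) (l : ℝ), F (l • x) = |l| * F x)
    (h_sep : ∀ x : EuclideanSpace ℝ (Fin n), F x = 0 ↔ x = 0) :
    ∃ A : EuclideanSpace ℝ (Fin n) ≃ₗ[ℝ] EuclideanSpace ℝ (Fin n),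
      ∀ g : EuclideanSpace ℝ (Fin n) → EuclideanSpace ℝ (Fin n),
        Function.Bijective g →
        (∀ x y, F (g y - g x) = F (y - x)) →
        ∀ x y, ‖A (g (A.symm y)) - A (g (A.symm x))‖ = ‖y - x‖ := by
  obtain ⟨A, hA⟩ := exists_linearEquiv_euclideanSpace_norm_sub_eq_of_map_sub_eq
    finrank_euclideanSpace_fin F h_subadd h_homog h_sep
  refine ⟨A, fun g hg hgF x y => ?_⟩
  simpa using hA g hg hgF (A.symm y) (A.symm x)
end

section
/- Let δ : ℝⁿ × ℝⁿ → ℝ be a finite weak metric, i.e. δ(x,y) ≥ 0, δ(x,x) = 0 for all x, and δ(x,z) ≤ δ(x,y) + δ(y,z) for all x, y, z. Then δ is a weak Minkowski metric (translation invariant and projective) if and only if δ satisfies the midpoint property and its restriction to every affine line is continuous, i.e. for all a, b ∈ ℝⁿ, setting γ(t) = (1−t)•a + t•b, the functions t ↦ δ(γ(t), b) and t ↦ δ(a, γ(t)) are continuous on ℝ. -/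
/-!
On a segment `[a, b]` the midpoint property makes the `2ⁿ` consecutive dyadic steps equally long,
each of length `δ a b / 2ⁿ`, so the triangle inequality along this chain is tight:
`δ a x = t * δ a b` and `δ x b = (1 - t) * δ a b` for dyadic `t` and `x = (1 - t) • a + t • b`.
Continuity on lines extends this to all `t ∈ [0, 1]`, which gives projectivity and the homogeneity
`δ x (x + m • u) = m * δ x (x + u)`. The midpoint property also bounds
`δ x (x + u) - δ x' (x' + u)` independently of `u`; replacing `u` by `m • u` shows that the
difference is `≤ 0`, which is translation invariance.

Conversely, for a weak Minkowski metric, `t ↦ δ a ((1 - t) • a + t • b)` is additive and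
nonnegative on `t ≥ 0`, hence linear there (and likewise on `t ≤ 0`), so it is continuous.
-/

open Filter Topology AffineMap

lemma nonpos_of_forall_nat_mul_le {K : Type*} [Field K] [LinearOrder K] [IsStrictOrderedRing K]
    [Archimedean K] {a C : K} (h : ∀ m : ℕ, m * a ≤ C) : a ≤ 0 := by
  by_contra! ha
  obtain ⟨m, hm⟩ := exists_nat_gt (C / a)
  rw [div_lt_iff₀ ha] at hm
  linarith [h m]

lemma eq_mul_apply_one_of_map_add_of_nonneg {f : ℝ → ℝ} (hf : ∀ t, 0 ≤ t → 0 ≤ f t)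
    (hadd : ∀ s u, 0 ≤ s → 0 ≤ u → f (s + u) = f s + f u) {t : ℝ} (ht : 0 ≤ t) :
    f t = t * f 1 := by
  have mono : ∀ s u, 0 ≤ s → s ≤ u → f s ≤ f u := fun s u hs hsu => by
    have := hadd s (u - s) hs (sub_nonneg.2 hsu)
    rw [add_sub_cancel] at this
    linarith [hf (u - s) (sub_nonneg.2 hsu)]
  have nat_mul : ∀ (m : ℕ) s, 0 ≤ s → f (m * s) = m * f s := by
    intro m s hs
    induction m with
    | zero => simpa using hadd 0 0 le_rfl le_rfl
    | succ m ih =>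
      push_cast
      rw [add_one_mul, hadd _ _ (by positivity) hs, ih]
      ring
  -- `f s - s * f 1` is bounded by `f 1` and scales by `m` when `s` does, so it vanishes.
  have bounded : ∀ s, 0 ≤ s → |f s - s * f 1| ≤ f 1 := by
    intro s hs
    have lower := mono _ _ (Nat.cast_nonneg _) (Nat.floor_le hs)
    have upper := mono _ _ hs (Nat.lt_floor_add_one s).le
    rw [← mul_one (⌊s⌋₊ : ℝ), nat_mul _ _ zero_le_one] at lower
    rw [← Nat.cast_succ, ← mul_one ((⌊s⌋₊ + 1 : ℕ) : ℝ), nat_mul _ _ zero_le_one] at upper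
    push_cast at upper
    have := hf 1 zero_le_one
    rw [abs_le]
    constructor <;> nlinarith [Nat.floor_le hs, Nat.lt_floor_add_one s]
  refine sub_eq_zero.1 (abs_nonpos_iff.1 (nonpos_of_forall_nat_mul_le (C := f 1) fun m => ?_))
  have := bounded (m * t) (by positivity)
  rwa [nat_mul m t ht, mul_assoc, ← mul_sub, abs_mul, Nat.abs_cast] at this

section Chain

variable {X : Type*} {δ : X → X → ℝ}

lemma dist_le_nat_mul_of_step_le (h_refl : ∀ x, δ x x = 0)
    (h_triangle : ∀ x y z, δ x z ≤ δ x y + δ y z) (x : ℕ → X) {d : ℝ}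
    (hstep : ∀ j, δ (x j) (x (j + 1)) ≤ d) (i k : ℕ) : δ (x i) (x (i + k)) ≤ k * d := by
  induction k with
  | zero => simp [h_refl]
  | succ k ih =>
    rw [← add_assoc, Nat.cast_succ]
    linarith [h_triangle (x i) (x (i + k)) (x (i + k + 1)), hstep (i + k)]

lemma dist_eq_of_step_eq (h_refl : ∀ x, δ x x = 0)
    (h_triangle : ∀ x y z, δ x z ≤ δ x y + δ y z) (x : ℕ → X) {d : ℝ}
    (hstep : ∀ j, δ (x j) (x (j + 1)) = d) {N k : ℕ} (hN : N * d ≤ δ (x 0) (x N))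
    (hk : k ≤ N) : δ (x 0) (x k) = k * d ∧ δ (x k) (x N) = (N - k) * d := by
  have hstep' j := (hstep j).le
  have head := dist_le_nat_mul_of_step_le h_refl h_triangle x hstep' 0 k
  have tail := dist_le_nat_mul_of_step_le h_refl h_triangle x hstep' k (N - k)
  rw [zero_add] at head
  rw [Nat.add_sub_cancel' hk, Nat.cast_sub hk] at tail
  have := h_triangle (x 0) (x k) (x N)
  constructor <;> nlinarith

end Chain

lemma half_smul_add_lineMap {V : Type*} [AddCommGroup V] [Module ℝ V] (a b : V) (s u : ℝ) :
    (1 / 2 : ℝ) • (lineMap a b s + lineMap a b u) = lineMap a b ((s + u) / 2) := by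
  simp only [lineMap_apply_module]
  module

namespace WeakMetric

variable {V : Type*} [AddCommGroup V] [Module ℝ V]

def IsTranslationInvariant (δ : V → V → ℝ) : Prop :=
  ∀ x y v : V, δ (x + v) (y + v) = δ x y

def IsProjective (δ : V → V → ℝ) : Prop :=
  ∀ x y z : V, (∃ t : ℝ, 0 ≤ t ∧ t ≤ 1 ∧ y = (1 - t) • x + t • z) → δ x z = δ x y + δ y z

def HasMidpointProperty (δ : V → V → ℝ) : Prop :=
  ∀ p q : V, δ p ((1 / 2 : ℝ) • (p + q)) = δ ((1 / 2 : ℝ) • (p + q)) q ∧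
    δ p ((1 / 2 : ℝ) • (p + q)) = δ p q / 2

def IsContinuousOnLines (δ : V → V → ℝ) : Prop :=
  ∀ a b : V, Continuous (fun t : ℝ => δ ((1 - t) • a + t • b) b) ∧
    Continuous (fun t : ℝ => δ a ((1 - t) • a + t • b))

def IsLinearOnSegments (δ : V → V → ℝ) : Prop :=
  ∀ (a b : V) (t : ℝ), 0 ≤ t → t ≤ 1 →
    δ a (lineMap a b t) = t * δ a b ∧ δ (lineMap a b t) b = (1 - t) * δ a b

variable {δ : V → V → ℝ}

namespace HasMidpointProperty

lemma dist_lineMap_step (hmid : HasMidpointProperty δ) (a b : V) (h : ℝ) (j : ℕ) :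
    δ (lineMap a b ((j : ℝ) * h)) (lineMap a b (((j : ℝ) + 1) * h)) = δ a (lineMap a b h) := by
  induction j with
  | zero => simp
  | succ j ih =>
    have := (hmid (lineMap a b ((j : ℝ) * h)) (lineMap a b (((j : ℝ) + 2) * h))).1
    rw [half_smul_add_lineMap, show (j * h + (j + 2) * h) / 2 = ((j : ℝ) + 1) * h by ring] at this
    rw [Nat.cast_succ, show ((j : ℝ) + 1 + 1) * h = (j + 2) * h by ring, ← this, ih]

lemma dist_lineMap_one_div_two_pow (hmid : HasMidpointProperty δ) (a b : V) (n : ℕ) :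
    δ a (lineMap a b (1 / 2 ^ n : ℝ)) = δ a b / 2 ^ n := by
  induction n with
  | zero => simp
  | succ n ih =>
    have := (hmid (lineMap a b (0 : ℝ)) (lineMap a b (1 / 2 ^ n : ℝ))).2
    rw [half_smul_add_lineMap, lineMap_apply_zero,
      show (0 + 1 / 2 ^ n) / 2 = (1 / 2 ^ (n + 1) : ℝ) by ring, ih] at this
    rw [this, pow_succ, div_div]

lemma dist_lineMap_dyadic (h_refl : ∀ x, δ x x = 0)
    (h_triangle : ∀ x y z, δ x z ≤ δ x y + δ y z) (hmid : HasMidpointProperty δ) (a b : V)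
    {n k : ℕ} (hk : k ≤ 2 ^ n) :
    δ a (lineMap a b ((k : ℝ) / 2 ^ n)) = k / 2 ^ n * δ a b ∧
      δ (lineMap a b ((k : ℝ) / 2 ^ n)) b = (1 - k / 2 ^ n) * δ a b := by
  set x : ℕ → V := fun j => lineMap a b ((j : ℝ) / 2 ^ n)
  have hx0 : x 0 = a := by simp [x]
  have hxN : x (2 ^ n) = b := by simp [x]
  have hstep j : δ (x j) (x (j + 1)) = δ a b / 2 ^ n := by
    simpa only [x, Nat.cast_succ, mul_one_div, hmid.dist_lineMap_one_div_two_pow]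
      using hmid.dist_lineMap_step a b (1 / 2 ^ n) j
  have hN : ((2 ^ n : ℕ) : ℝ) * (δ a b / 2 ^ n) ≤ δ (x 0) (x (2 ^ n)) := by
    rw [hx0, hxN, Nat.cast_pow, Nat.cast_ofNat, mul_div_cancel₀ _ (by positivity)]
  obtain ⟨head, tail⟩ := dist_eq_of_step_eq h_refl h_triangle x hstep hN hk
  rw [hx0] at head
  rw [hxN] at tail
  push_cast at tail
  constructor
  · rw [head]; ring
  · rw [tail]; field_simp

lemma isLinearOnSegments (h_refl : ∀ x, δ x x = 0)
    (h_triangle : ∀ x y z, δ x z ≤ δ x y + δ y z) (hmid : HasMidpointProperty δ)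
    (hcont : IsContinuousOnLines δ) : IsLinearOnSegments δ := by
  intro a b t ht0 ht1
  have hq : Tendsto (fun n : ℕ => (⌊t * 2 ^ n⌋₊ : ℝ) / 2 ^ n) atTop (𝓝 t) :=
    (tendsto_nat_floor_mul_div_atTop ht0).comp (tendsto_pow_atTop_atTop_of_one_lt one_lt_two)
  have hk n : ⌊t * 2 ^ n⌋₊ ≤ 2 ^ n :=
    Nat.floor_le_of_le (by push_cast; exact mul_le_of_le_one_left (by positivity) ht1)
  have hdyadic n := hmid.dist_lineMap_dyadic h_refl h_triangle a b (hk n)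
  have hc₁ : Continuous fun s : ℝ => δ a (lineMap a b s) := by
    simpa only [lineMap_apply_module] using (hcont a b).2
  have hc₂ : Continuous fun s : ℝ => δ (lineMap a b s) b := by
    simpa only [lineMap_apply_module] using (hcont a b).1
  constructor
  · refine tendsto_nhds_unique ((hc₁.tendsto t).comp hq) ?_
    exact (hq.mul_const _).congr fun n => (hdyadic n).1.symm
  · refine tendsto_nhds_unique ((hc₂.tendsto t).comp hq) ?_
    exact ((tendsto_const_nhds.sub hq).mul_const _).congr fun n => (hdyadic n).2.symm

lemma dist_add_sub_dist_add_le (h_triangle : ∀ x y z, δ x z ≤ δ x y + δ y z)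
    (hmid : HasMidpointProperty δ) (x x' u : V) :
    δ x (x + u) - δ x' (x' + u) ≤ δ x x' + δ x' x := by
  -- Pass through the common midpoint of `x, x' + u` and of `x', x + u`.
  have hm : (1 / 2 : ℝ) • (x' + (x + u)) = (1 / 2 : ℝ) • (x + (x' + u)) := by module
  have h₁ := (hmid x (x' + u)).2
  have h₂ := hmid x' (x + u)
  rw [hm] at h₂
  linarith [h_triangle x ((1 / 2 : ℝ) • (x + (x' + u))) (x + u), h_triangle x x' (x' + u),
    h_triangle x' x (x + u)]

end HasMidpointProperty

namespace IsLinearOnSegments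

lemma isProjective (hlin : IsLinearOnSegments δ) : IsProjective δ := by
  rintro x y z ⟨t, ht0, ht1, rfl⟩
  rw [← lineMap_apply_module, (hlin x z t ht0 ht1).1, (hlin x z t ht0 ht1).2]
  ring

lemma dist_add_nsmul (h_refl : ∀ x, δ x x = 0) (hlin : IsLinearOnSegments δ) (x u : V)
    (m : ℕ) : δ x (x + m • u) = m * δ x (x + u) := by
  rcases Nat.eq_zero_or_pos m with rfl | hm
  · simp [h_refl]
  have hu : x + u = lineMap x (x + m • u) (1 / m : ℝ) := by
    rw [lineMap_apply_module', add_sub_cancel_left, ← Nat.cast_smul_eq_nsmul ℝ, smul_smul,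
      one_div_mul_cancel (by positivity), one_smul, add_comm]
  rw [hu, (hlin _ _ _ (by positivity) (div_le_one_of_le₀ (by exact_mod_cast hm) (by positivity))).1]
  field_simp

lemma isTranslationInvariant (h_refl : ∀ x, δ x x = 0)
    (h_triangle : ∀ x y z, δ x z ≤ δ x y + δ y z) (hmid : HasMidpointProperty δ)
    (hlin : IsLinearOnSegments δ) : IsTranslationInvariant δ := by
  have key (x x' u : V) : δ x (x + u) ≤ δ x' (x' + u) := by
    refine sub_nonpos.1 (nonpos_of_forall_nat_mul_le (C := δ x x' + δ x' x) fun m => ?_)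
    have := hmid.dist_add_sub_dist_add_le h_triangle x x' (m • u)
    rw [hlin.dist_add_nsmul h_refl, hlin.dist_add_nsmul h_refl] at this
    linarith
  intro x y v
  have h₁ := key x (x + v) (y - x)
  have h₂ := key (x + v) x (y - x)
  rw [add_sub_cancel, show x + v + (y - x) = y + v by abel] at h₁ h₂
  exact le_antisymm h₂ h₁

end IsLinearOnSegments

lemma IsProjective.dist_eq_dist_lineMap_add (hP : IsProjective δ) (x z : V) {t : ℝ}
    (ht0 : 0 ≤ t) (ht1 : t ≤ 1) : δ x z = δ x (lineMap x z t) + δ (lineMap x z t) z :=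
  hP x _ z ⟨t, ht0, ht1, lineMap_apply_module x z t⟩

namespace IsTranslationInvariant

lemma dist_lineMap_lineMap_add (hT : IsTranslationInvariant δ) (a b : V) (s u : ℝ) :
    δ (lineMap a b s) (lineMap a b (s + u)) = δ a (lineMap a b u) := by
  rw [← hT a (lineMap a b u) (s • (b - a))]
  congr 1 <;> simp only [lineMap_apply_module'] <;> module

lemma dist_lineMap_of_nonneg (h_nonneg : ∀ x y, 0 ≤ δ x y) (hT : IsTranslationInvariant δ)
    (hP : IsProjective δ) (a b : V) {t : ℝ} (ht : 0 ≤ t) :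
    δ a (lineMap a b t) = t * δ a b := by
  suffices hadd : ∀ s u : ℝ, 0 ≤ s → 0 ≤ u →
      δ a (lineMap a b (s + u)) = δ a (lineMap a b s) + δ a (lineMap a b u) by
    simpa using
      eq_mul_apply_one_of_map_add_of_nonneg (fun t _ => h_nonneg a (lineMap a b t)) hadd ht
  intro s u hs hu
  have hsu : lineMap a (lineMap a b (s + u)) (s / (s + u)) = lineMap a b s := by
    rw [lineMap_lineMap_right, div_mul_cancel_of_imp fun h => by linarith]
  have := hP.dist_eq_dist_lineMap_add a (lineMap a b (s + u)) (t := s / (s + u)) (by positivity)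
    (div_le_one_of_le₀ (by linarith) (by positivity))
  rwa [hsu, hT.dist_lineMap_lineMap_add] at this

lemma continuous_dist_lineMap (h_nonneg : ∀ x y, 0 ≤ δ x y) (hT : IsTranslationInvariant δ)
    (hP : IsProjective δ) (a b : V) : Continuous fun t : ℝ => δ a (lineMap a b t) := by
  -- For `t ≤ 0`, `lineMap a b t` lies on the ray from `a` through `lineMap a b (-1)`.
  have h (t : ℝ) :
      δ a (lineMap a b t) = max t 0 * δ a b + max (-t) 0 * δ a (lineMap a b (-1 : ℝ)) := by
    rcases le_total 0 t with ht | ht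
    · rw [max_eq_left ht, max_eq_right (neg_nonpos.2 ht),
        hT.dist_lineMap_of_nonneg h_nonneg hP a b ht]
      ring
    · rw [max_eq_right ht, max_eq_left (neg_nonneg.2 ht),
        ← hT.dist_lineMap_of_nonneg h_nonneg hP a _ (neg_nonneg.2 ht), lineMap_lineMap_right,
        neg_mul_neg, mul_one]
      ring
  rw [show (fun t : ℝ => δ a (lineMap a b t)) = _ from funext h]
  fun_prop

lemma isContinuousOnLines (h_nonneg : ∀ x y, 0 ≤ δ x y) (hT : IsTranslationInvariant δ)
    (hP : IsProjective δ) : IsContinuousOnLines δ := by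
  intro a b
  simp only [← lineMap_apply_module]
  refine ⟨?_, hT.continuous_dist_lineMap h_nonneg hP a b⟩
  have h (t : ℝ) : δ (lineMap a b t) b = δ a (lineMap a b (1 - t)) := by
    rw [← hT.dist_lineMap_lineMap_add a b t (1 - t), add_sub_cancel, lineMap_apply_one]
  simp_rw [h]
  exact (hT.continuous_dist_lineMap h_nonneg hP a b).comp (continuous_const.sub continuous_id)

lemma hasMidpointProperty (hT : IsTranslationInvariant δ) (hP : IsProjective δ) :
    HasMidpointProperty δ := by
  intro p q
  have hm : (1 / 2 : ℝ) • (p + q) = lineMap p q (1 / 2 : ℝ) := by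
    rw [lineMap_apply_module]; module
  have hsplit := hP.dist_eq_dist_lineMap_add p q (t := 1 / 2) (by norm_num) (by norm_num)
  have hshift := hT.dist_lineMap_lineMap_add p q (1 / 2) (1 / 2)
  rw [add_halves, lineMap_apply_one] at hshift
  rw [hm]
  exact ⟨hshift.symm, by linarith⟩

end IsTranslationInvariant

end WeakMetric

/-- Busemann's characterization: a finite weak metric on `ℝⁿ` is a weak Minkowski metric
(translation invariant and projective) if and only if it satisfies the midpoint property
and its restriction to every affine line is continuous. -/
theorem finite_weak_metric_minkowski_iff_midpoint_and_line_continuous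
    {n : ℕ} (δ : EuclideanSpace ℝ (Fin n) → EuclideanSpace ℝ (Fin n) → ℝ)
    (h_nonneg : ∀ x y, 0 ≤ δ x y)
    (h_refl : ∀ x, δ x x = 0)
    (h_triangle : ∀ x y z, δ x z ≤ δ x y + δ y z) :
    ((∀ x y v, δ (x + v) (y + v) = δ x y) ∧
     (∀ x y z : EuclideanSpace ℝ (Fin n),
        (∃ t : ℝ, 0 ≤ t ∧ t ≤ 1 ∧ y = (1 - t) • x + t • z) →
        δ x z = δ x y + δ y z)) ↔
    ((∀ p q : EuclideanSpace ℝ (Fin n),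
        δ p ((1/2 : ℝ) • (p + q)) = δ ((1/2 : ℝ) • (p + q)) q ∧
        δ p ((1/2 : ℝ) • (p + q)) = δ p q / 2) ∧
     (∀ a b : EuclideanSpace ℝ (Fin n),
        Continuous (fun t : ℝ => δ ((1 - t) • a + t • b) b) ∧
        Continuous (fun t : ℝ => δ a ((1 - t) • a + t • b)))) := by
  constructor
  · rintro ⟨hT, hP⟩
    exact ⟨WeakMetric.IsTranslationInvariant.hasMidpointProperty hT hP,
      WeakMetric.IsTranslationInvariant.isContinuousOnLines h_nonneg hT hP⟩
  · rintro ⟨hmid, hcont⟩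
    have hlin := WeakMetric.HasMidpointProperty.isLinearOnSegments h_refl h_triangle hmid hcont
    exact ⟨hlin.isTranslationInvariant h_refl h_triangle hmid, hlin.isProjective⟩
end
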